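/- (Theorem 1, Lorden-like criterion, single change-point.) Let T ≥ 1 and let τ be a stopping time of (F_t) with τ ≥ 1, P∞(τ < ∞) = 1, and 0 < E∞[τ] < ∞. Suppose c ≥ 0 is a constant such that for every γ ≥ 1, c·1{τ ≥ γ} ≤ P_γ(τ = γ | F_{γ−1}) holds P_γ-almost surely. Then c·E∞[τ] ≤ E∞[ℓ(X_τ)], where the right-hand side is the (possibly infinite) integral of ℓ(X_τ) under P∞. -/

import Mathlib

/-!
Under `P γ` the first `γ - 1` observations have the same law as under `P∞`, and on `F_γ` the
measure `P γ` is `P∞` reweighted by the likelihood ratio `ℓ(X_γ)` of the single observation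
`X_γ` (a change lasting `T ≥ 1` steps only affects `X_γ` among `X_1, …, X_γ`).
Since `{τ ≥ γ}` is `F_{γ-1}`-measurable and `{τ = γ}` is `F_γ`-measurable, integrating the
hypothesis gives `c · P∞(τ ≥ γ) = c · P_γ(τ ≥ γ) ≤ P_γ(τ = γ) = E∞[ℓ(X_γ); τ = γ]`.
Summing over `γ ≥ 1` turns the left side into `c · E∞[τ]` and the right side into
`E∞[ℓ(X_τ); 1 ≤ τ < ∞]`.
-/

open MeasureTheory ProbabilityTheory
open scoped ENNReal

/-- The natural filtration `F_t = σ(X_1, …, X_t)` on the sequence space. -/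
def natF (E : Type*) [MeasurableSpace E] (t : ℕ) : MeasurableSpace (ℕ → E) :=
  ⨆ i ∈ Finset.Icc 1 t, MeasurableSpace.comap (fun ω : ℕ → E => ω i) inferInstance

lemma ENat.toENNReal_eq_tsum_lt (k : ℕ∞) :
    (k : ℝ≥0∞) = ∑' n : ℕ, if (n : ℕ∞) < k then 1 else 0 := by
  induction k using ENat.recTopCoe with
  | top => simp
  | coe m =>
    simp only [Nat.cast_lt, ENat.toENNReal_coe]
    rw [tsum_eq_sum (s := Finset.range m) (by simp),
      Finset.sum_ite_of_true fun n hn => Finset.mem_range.mp hn]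
    simp

lemma lintegral_enat_eq_tsum_measure_lt {Ω : Type*} [MeasurableSpace Ω] (μ : Measure Ω)
    (τ : Ω → ℕ∞) (hτ : ∀ n : ℕ, MeasurableSet {ω | (n : ℕ∞) < τ ω}) :
    ∫⁻ ω, (τ ω : ℝ≥0∞) ∂μ = ∑' n : ℕ, μ {ω | (n : ℕ∞) < τ ω} := by
  simp_rw [ENat.toENNReal_eq_tsum_lt]
  rw [lintegral_tsum fun n =>
    (Measurable.ite (hτ n) measurable_const measurable_const).aemeasurable]
  congr! with n
  rw [← lintegral_indicator_one (hτ n)]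
  simp [Set.indicator_apply]

lemma tsum_setLIntegral_le_lintegral_comp_toNat {Ω : Type*} [MeasurableSpace Ω]
    (μ : Measure Ω) {τ : Ω → ℕ∞} (hτ : ∀ n : ℕ, MeasurableSet {ω | τ ω = (n : ℕ∞)})
    (f : ℕ → Ω → ℝ≥0∞) :
    ∑' n : ℕ, ∫⁻ ω in {ω | τ ω = (n : ℕ∞)}, f n ω ∂μ ≤ ∫⁻ ω, f (τ ω).toNat ω ∂μ := by
  have hdisj : Pairwise (Function.onFun Disjoint fun n : ℕ => {ω | τ ω = (n : ℕ∞)}) :=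
    fun m n hmn => Set.disjoint_left.2 fun ω (hm : τ ω = _) (hn : τ ω = _) =>
      hmn (by simpa [hm] using hn)
  calc ∑' n : ℕ, ∫⁻ ω in {ω | τ ω = (n : ℕ∞)}, f n ω ∂μ
      = ∑' n : ℕ, ∫⁻ ω in {ω | τ ω = (n : ℕ∞)}, f (τ ω).toNat ω ∂μ :=
        tsum_congr fun n => setLIntegral_congr_fun (hτ n) fun ω (hω : τ ω = _) => by
          rw [hω, ENat.toNat_natCast]
    _ = ∫⁻ ω in ⋃ n : ℕ, {ω | τ ω = (n : ℕ∞)}, f (τ ω).toNat ω ∂μ :=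
        (lintegral_iUnion hτ hdisj _).symm
    _ ≤ ∫⁻ ω, f (τ ω).toNat ω ∂μ := setLIntegral_le_lintegral _ _

lemma ofReal_mul_measure_le_of_ae_le_condExp {Ω : Type*} {m mΩ : MeasurableSpace Ω}
    {P : Measure Ω} [IsFiniteMeasure P] (hm : m ≤ mΩ) {A B : Set Ω}
    (hA : MeasurableSet A) (hB : MeasurableSet B) {c : ℝ} (hc0 : 0 ≤ c)
    (hc : ∀ᵐ ω ∂P, c * A.indicator (fun _ => (1 : ℝ)) ω
      ≤ P[B.indicator (fun _ => (1 : ℝ)) | m] ω) :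
    ENNReal.ofReal c * P A ≤ P B := by
  have hint := integral_mono_ae (((integrable_const 1).indicator hA).const_mul c)
    integrable_condExp hc
  rw [integral_condExp hm, integral_const_mul, integral_indicator_const 1 hA,
    integral_indicator_const 1 hB, smul_eq_mul, smul_eq_mul, mul_one, mul_one,
    measureReal_def, measureReal_def] at hint
  rw [← ENNReal.ofReal_toReal (measure_ne_top P A), ← ENNReal.ofReal_mul hc0,
    ← ENNReal.ofReal_toReal (measure_ne_top P B)]
  exact ENNReal.ofReal_le_ofReal hint

namespace MeasureTheory.Measure

variable {ι : Type*} {X : ι → Type*} [∀ i, MeasurableSpace (X i)]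

lemma eq_infinitePi_of_iIndepFun {P : Measure (Π i, X i)} {μ : ∀ i, Measure (X i)}
    [∀ i, IsProbabilityMeasure (μ i)] (hP : iIndepFun (fun i ω => ω i) P)
    (hmarg : ∀ i, P.map (fun ω => ω i) = μ i) : P = infinitePi μ := by
  simpa [hmarg] using hP.map_fun_eq_infinitePi_map measurable_pi_apply

lemma infinitePi_apply_eq_of_measurableSet_piFinset {μ ν : ∀ i, Measure (X i)}
    [∀ i, IsProbabilityMeasure (μ i)] [∀ i, IsProbabilityMeasure (ν i)] {s : Finset ι}
    (h : ∀ i ∈ s, μ i = ν i) {A : Set (Π i, X i)}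
    (hA : MeasurableSet[Filtration.piFinset s] A) :
    infinitePi μ A = infinitePi ν A := by
  obtain ⟨B, hB, rfl⟩ := hA
  have hμν : (fun i : s => μ i) = fun i : s => ν i := funext fun i => h i i.2
  rw [← map_apply s.measurable_restrict hB, ← map_apply s.measurable_restrict hB,
    infinitePi_map_restrict, infinitePi_map_restrict, hμν]

lemma infinitePi_withDensity_rnDeriv {μ ν : ∀ i, Measure (X i)}
    [∀ i, IsProbabilityMeasure (μ i)] [∀ i, IsProbabilityMeasure (ν i)] {i₀ : ι}
    (hν : ∀ i ≠ i₀, ν i = μ i) (hac : ν i₀ ≪ μ i₀) :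
    (infinitePi μ).withDensity (fun ω => (ν i₀).rnDeriv (μ i₀) (ω i₀)) = infinitePi ν := by
  classical
  refine eq_infinitePi _ fun s t ht => ?_
  set d : ∀ i, X i → ℝ≥0∞ := Function.update (fun _ _ => 1) i₀ ((ν i₀).rnDeriv (μ i₀))
  set t' : ∀ i, Set (X i) := fun i => if i ∈ s then t i else Set.univ
  have ht' : ∀ i, MeasurableSet (t' i) := fun i => by
    by_cases hi : i ∈ s <;> simp [t', hi, ht i]
  have hd : ∀ i, Measurable (d i) := fun i => by
    rcases eq_or_ne i i₀ with rfl | hi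
    · simpa [d] using measurable_rnDeriv _ _
    · simp [d, hi]
  have hint : ∀ i, ∫⁻ x in t' i, d i x ∂μ i = ν i (t' i) := fun i => by
    rcases eq_or_ne i i₀ with rfl | hi
    · simpa [d] using setLIntegral_rnDeriv' hac (ht' i)
    · simp [d, hi, hν i hi]
  -- On a box the weighted indicator factors over the coordinates in `insert i₀ s`, so the
  -- independence of the coordinates under `infinitePi μ` splits its integral.
  have hpt : ∀ ω, (Set.pi s t).indicator (fun ω => (ν i₀).rnDeriv (μ i₀) (ω i₀)) ω
      = ∏ i ∈ insert i₀ s, (t' i).indicator (d i) (ω i) := fun ω => by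
    by_cases hω : ω ∈ Set.pi s t
    · have hmem : ∀ i, ω i ∈ t' i := fun i => by
        by_cases hi : i ∈ s <;> simp [t', hi, hω i]
      rw [Set.indicator_of_mem hω, Finset.prod_eq_single_of_mem i₀ (Finset.mem_insert_self _ _)]
      · simp [hmem, d]
      · intro i _ hi
        simp [hmem, d, hi]
    · obtain ⟨i, hi, hωi⟩ : ∃ i ∈ s, ω i ∉ t i := by simpa [Set.mem_pi] using hω
      rw [Set.indicator_of_notMem hω, eq_comm]
      exact Finset.prod_eq_zero (Finset.mem_insert_of_mem hi) (by simp [t', hi, hωi])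
  calc (infinitePi μ).withDensity (fun ω => (ν i₀).rnDeriv (μ i₀) (ω i₀)) (Set.pi s t)
      = ∫⁻ ω, ∏ i ∈ insert i₀ s, (t' i).indicator (d i) (ω i) ∂infinitePi μ := by
        rw [withDensity_apply' _ _,
          ← lintegral_indicator (MeasurableSet.pi s.countable_toSet fun i _ => ht i)]
        exact lintegral_congr hpt
    _ = ∏ i ∈ insert i₀ s, ν i (t' i) := by
        rw [lintegral_prod_eq_prod_lintegral_of_indepFun _ _
          (iIndepFun_infinitePi fun i => (hd i).indicator (ht' i))
          fun i => ((hd i).indicator (ht' i)).comp (measurable_pi_apply i)]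
        refine Finset.prod_congr rfl fun i _ => ?_
        rw [← hint i, ← lintegral_indicator (ht' i), ← lintegral_map _ (measurable_pi_apply i),
          infinitePi_map_eval]
        exact (hd i).indicator (ht' i)
    _ = ∏ i ∈ s, ν i (t i) := by
        refine (Finset.prod_subset (Finset.subset_insert _ _) fun i _ hi => ?_).symm.trans ?_
        · simp [t', hi]
        · exact Finset.prod_congr rfl fun i hi => by simp [t', hi]

end MeasureTheory.Measure

section ChangePoint

open Measure

variable {E : Type*} [MeasurableSpace E]

lemma natF_eq_piFinset (t : ℕ) :
    natF E t = Filtration.piFinset (X := fun _ => E) (Finset.Icc 1 t) := by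
  rw [Filtration.piFinset_eq_comap_restrict, MeasurableSpace.pi, MeasurableSpace.comap_iSup,
    natF]
  simp_rw [MeasurableSpace.comap_comp]
  rw [iSup_subtype']
  rfl

lemma natF_le (t : ℕ) : natF E t ≤ MeasurableSpace.pi := by
  rw [natF_eq_piFinset]
  exact Filtration.le _ _

lemma natF_mono : Monotone (natF E) := fun s t hst => by
  rw [natF_eq_piFinset, natF_eq_piFinset]
  exact Filtration.mono _ (Finset.Icc_subset_Icc_right hst)

lemma measurableSet_natF_lt {τ : (ℕ → E) → ℕ∞}
    (hτ : ∀ t : ℕ, MeasurableSet[natF E t] {ω | τ ω ≤ (t : ℕ∞)}) (n : ℕ) :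
    MeasurableSet[natF E n] {ω | (n : ℕ∞) < τ ω} := by
  simpa only [Set.compl_ofPred, not_le] using (hτ n).compl

lemma measurableSet_natF_pred_le {τ : (ℕ → E) → ℕ∞}
    (hτ : ∀ t : ℕ, MeasurableSet[natF E t] {ω | τ ω ≤ (t : ℕ∞)}) (γ : ℕ) :
    MeasurableSet[natF E (γ - 1)] {ω | (γ : ℕ∞) ≤ τ ω} := by
  cases γ with
  | zero => simp
  | succ n => simpa [ENat.add_one_le_iff] using measurableSet_natF_lt hτ n

lemma measurableSet_natF_eq {τ : (ℕ → E) → ℕ∞}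
    (hτ : ∀ t : ℕ, MeasurableSet[natF E t] {ω | τ ω ≤ (t : ℕ∞)}) (γ : ℕ) :
    MeasurableSet[natF E γ] {ω | τ ω = (γ : ℕ∞)} := by
  have h := (hτ γ).inter (natF_mono (Nat.sub_le γ 1) _ (measurableSet_natF_pred_le hτ γ))
  simpa only [← Set.ofPred_and, ← le_antisymm_iff] using h

variable {μ0 μ1 : Measure E} [IsProbabilityMeasure μ0] [IsProbabilityMeasure μ1]
  {Pinf Pγ : Measure (ℕ → E)} {γ T : ℕ}

lemma measure_eq_of_measurableSet_natF_of_lt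
    (hPinf_indep : iIndepFun (fun t (ω : ℕ → E) => ω t) Pinf)
    (hPinf_marg : ∀ t : ℕ, Pinf.map (fun ω => ω t) = μ0)
    (hPγ_indep : iIndepFun (fun t (ω : ℕ → E) => ω t) Pγ)
    (hPγ_marg : ∀ t : ℕ, Pγ.map (fun ω => ω t) = if γ ≤ t ∧ t < γ + T then μ1 else μ0)
    {n : ℕ} (hn : n < γ) {A : Set (ℕ → E)} (hA : MeasurableSet[natF E n] A) :
    Pγ A = Pinf A := by
  have (t : ℕ) : IsProbabilityMeasure (if γ ≤ t ∧ t < γ + T then μ1 else μ0) := by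
    split_ifs <;> infer_instance
  rw [eq_infinitePi_of_iIndepFun hPγ_indep hPγ_marg,
    eq_infinitePi_of_iIndepFun hPinf_indep hPinf_marg]
  refine infinitePi_apply_eq_of_measurableSet_piFinset (fun t ht => ?_)
    (natF_eq_piFinset (E := E) n ▸ hA)
  rw [Finset.mem_Icc] at ht
  exact if_neg (by omega)

lemma measure_eq_withDensity_of_measurableSet_natF (hT : 1 ≤ T) (hac : μ1 ≪ μ0)
    (hPinf_indep : iIndepFun (fun t (ω : ℕ → E) => ω t) Pinf)
    (hPinf_marg : ∀ t : ℕ, Pinf.map (fun ω => ω t) = μ0)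
    (hPγ_indep : iIndepFun (fun t (ω : ℕ → E) => ω t) Pγ)
    (hPγ_marg : ∀ t : ℕ, Pγ.map (fun ω => ω t) = if γ ≤ t ∧ t < γ + T then μ1 else μ0)
    {A : Set (ℕ → E)} (hA : MeasurableSet[natF E γ] A) :
    Pγ A = Pinf.withDensity (fun ω => μ1.rnDeriv μ0 (ω γ)) A := by
  have (t : ℕ) : IsProbabilityMeasure (if γ ≤ t ∧ t < γ + T then μ1 else μ0) := by
    split_ifs <;> infer_instance
  have (t : ℕ) : IsProbabilityMeasure (if t = γ then μ1 else μ0) := by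
    split_ifs <;> infer_instance
  have hchange : (infinitePi fun _ => μ0).withDensity (fun ω => μ1.rnDeriv μ0 (ω γ))
      = infinitePi fun t => if t = γ then μ1 else μ0 := by
    simpa using infinitePi_withDensity_rnDeriv (μ := fun _ => μ0)
      (ν := fun t => if t = γ then μ1 else μ0) (i₀ := γ) (fun t ht => if_neg ht) (by simpa)
  rw [eq_infinitePi_of_iIndepFun hPγ_indep hPγ_marg,
    eq_infinitePi_of_iIndepFun hPinf_indep hPinf_marg, hchange]
  refine infinitePi_apply_eq_of_measurableSet_piFinset (fun t ht => ?_)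
    (natF_eq_piFinset (E := E) γ ▸ hA)
  rw [Finset.mem_Icc] at ht
  rcases eq_or_lt_of_le ht.2 with rfl | hlt
  · rw [if_pos ⟨le_rfl, by omega⟩, if_pos rfl]
  · rw [if_neg (by omega), if_neg hlt.ne]

lemma ofReal_mul_measure_le_setLIntegral_rnDeriv [IsProbabilityMeasure Pγ]
    (hT : 1 ≤ T) (hac : μ1 ≪ μ0)
    (hPinf_indep : iIndepFun (fun t (ω : ℕ → E) => ω t) Pinf)
    (hPinf_marg : ∀ t : ℕ, Pinf.map (fun ω => ω t) = μ0)
    (hPγ_indep : iIndepFun (fun t (ω : ℕ → E) => ω t) Pγ)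
    (hPγ_marg : ∀ t : ℕ, Pγ.map (fun ω => ω t) = if γ ≤ t ∧ t < γ + T then μ1 else μ0)
    (hγ : 1 ≤ γ) {τ : (ℕ → E) → ℕ∞}
    (hτ : ∀ t : ℕ, MeasurableSet[natF E t] {ω | τ ω ≤ (t : ℕ∞)}) {c : ℝ} (hc0 : 0 ≤ c)
    (hc : ∀ᵐ ω ∂Pγ, c * ({ω' | (γ : ℕ∞) ≤ τ ω'}.indicator (fun _ => (1 : ℝ)) ω)
      ≤ (Pγ[{ω' | τ ω' = (γ : ℕ∞)}.indicator (fun _ => (1 : ℝ)) | natF E (γ - 1)]) ω) :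
    ENNReal.ofReal c * Pinf {ω | (γ : ℕ∞) ≤ τ ω}
      ≤ ∫⁻ ω in {ω | τ ω = (γ : ℕ∞)}, μ1.rnDeriv μ0 (ω γ) ∂Pinf := by
  have hge := measurableSet_natF_pred_le hτ γ
  have heq := measurableSet_natF_eq hτ γ
  calc ENNReal.ofReal c * Pinf {ω | (γ : ℕ∞) ≤ τ ω}
      = ENNReal.ofReal c * Pγ {ω | (γ : ℕ∞) ≤ τ ω} := by
        rw [measure_eq_of_measurableSet_natF_of_lt hPinf_indep hPinf_marg hPγ_indep hPγ_marg
          (by omega) hge]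
    _ ≤ Pγ {ω | τ ω = (γ : ℕ∞)} :=
        ofReal_mul_measure_le_of_ae_le_condExp (natF_le _) (natF_le _ _ hge)
          (natF_le _ _ heq) hc0 hc
    _ = ∫⁻ ω in {ω | τ ω = (γ : ℕ∞)}, μ1.rnDeriv μ0 (ω γ) ∂Pinf := by
        rw [measure_eq_withDensity_of_measurableSet_natF hT hac hPinf_indep hPinf_marg
          hPγ_indep hPγ_marg heq, withDensity_apply _ (natF_le _ _ heq)]

end ChangePoint

theorem stmt_4_general
    {E : Type*} [MeasurableSpace E]
    (μ0 μ1 : Measure E) [IsProbabilityMeasure μ0] [IsProbabilityMeasure μ1]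
    (hac : μ1 ≪ μ0)
    (T : ℕ) (hT : 1 ≤ T)
    (Pinf : Measure (ℕ → E))
    (hPinf_indep :
      iIndepFun
        (fun t (ω : ℕ → E) => ω t) Pinf)
    (hPinf_marg : ∀ t : ℕ, Pinf.map (fun ω => ω t) = μ0)
    (P : ℕ → Measure (ℕ → E))
    (hP_prob : ∀ γ, 1 ≤ γ → IsProbabilityMeasure (P γ))
    (hP_indep : ∀ γ, 1 ≤ γ →
      iIndepFun
        (fun t (ω : ℕ → E) => ω t) (P γ))
    (hP_marg : ∀ γ, 1 ≤ γ → ∀ t : ℕ,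
      (P γ).map (fun ω => ω t) = if γ ≤ t ∧ t < γ + T then μ1 else μ0)
    (τ : (ℕ → E) → ℕ∞)
    (hτ_stop : ∀ t : ℕ, MeasurableSet[natF E t] {ω | τ ω ≤ (t : ℕ∞)})
    (c : ℝ) (hc0 : 0 ≤ c)
    (hc : ∀ γ : ℕ, 1 ≤ γ →
      ∀ᵐ ω ∂(P γ),
        c * ({ω' | (γ : ℕ∞) ≤ τ ω'}.indicator (fun _ => (1 : ℝ)) ω)
          ≤ ((P γ)[{ω' | τ ω' = (γ : ℕ∞)}.indicator (fun _ => (1 : ℝ)) |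
              natF E (γ - 1)]) ω) :
    ENNReal.ofReal c * ∫⁻ ω, (τ ω : ℝ≥0∞) ∂Pinf
      ≤ ∫⁻ ω, μ1.rnDeriv μ0 (ω (τ ω).toNat) ∂Pinf := by
  calc ENNReal.ofReal c * ∫⁻ ω, (τ ω : ℝ≥0∞) ∂Pinf
      = ∑' n : ℕ, ENNReal.ofReal c * Pinf {ω | ((n + 1 : ℕ) : ℕ∞) ≤ τ ω} := by
        rw [lintegral_enat_eq_tsum_measure_lt Pinf τ
          fun n => natF_le n _ (measurableSet_natF_lt hτ_stop n), ENNReal.tsum_mul_left]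
        simp [ENat.add_one_le_iff]
    _ ≤ ∑' n : ℕ, ∫⁻ ω in {ω | τ ω = ((n + 1 : ℕ) : ℕ∞)},
          μ1.rnDeriv μ0 (ω (n + 1)) ∂Pinf :=
        ENNReal.tsum_le_tsum fun n => by
          have hγ : 1 ≤ n + 1 := Nat.le_add_left 1 n
          have := hP_prob _ hγ
          exact ofReal_mul_measure_le_setLIntegral_rnDeriv hT hac hPinf_indep hPinf_marg
            (hP_indep _ hγ) (hP_marg _ hγ) hγ hτ_stop hc0 (hc _ hγ)
    _ ≤ ∑' n : ℕ, ∫⁻ ω in {ω | τ ω = (n : ℕ∞)}, μ1.rnDeriv μ0 (ω n) ∂Pinf :=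
        ENNReal.tsum_comp_le_tsum_of_injective (add_left_injective 1) _
    _ ≤ ∫⁻ ω, μ1.rnDeriv μ0 (ω (τ ω).toNat) ∂Pinf :=
        tsum_setLIntegral_le_lintegral_comp_toNat Pinf
          (fun n => natF_le n _ (measurableSet_natF_eq hτ_stop n)) _

theorem stmt_4
    {E : Type*} [MeasurableSpace E]
    (μ0 μ1 : Measure E) [IsProbabilityMeasure μ0] [IsProbabilityMeasure μ1]
    (hac : μ1 ≪ μ0)
    (T : ℕ) (hT : 1 ≤ T)
    (Pinf : Measure (ℕ → E)) [IsProbabilityMeasure Pinf]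
    (hPinf_indep :
      iIndepFun
        (fun t (ω : ℕ → E) => ω t) Pinf)
    (hPinf_marg : ∀ t : ℕ, Pinf.map (fun ω => ω t) = μ0)
    (P : ℕ → Measure (ℕ → E))
    (hP_prob : ∀ γ, 1 ≤ γ → IsProbabilityMeasure (P γ))
    (hP_indep : ∀ γ, 1 ≤ γ →
      iIndepFun
        (fun t (ω : ℕ → E) => ω t) (P γ))
    (hP_marg : ∀ γ, 1 ≤ γ → ∀ t : ℕ,
      (P γ).map (fun ω => ω t) = if γ ≤ t ∧ t < γ + T then μ1 else μ0)
    (τ : (ℕ → E) → ℕ∞)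
    (hτ1 : ∀ ω, 1 ≤ τ ω)
    (hτ_stop : ∀ t : ℕ, MeasurableSet[natF E t] {ω | τ ω ≤ (t : ℕ∞)})
    (hτ_fin : Pinf {ω | τ ω ≠ ⊤} = 1)
    (hτ_pos : 0 < ∫⁻ ω, (τ ω : ℝ≥0∞) ∂Pinf)
    (hτ_int : ∫⁻ ω, (τ ω : ℝ≥0∞) ∂Pinf < ⊤)
    (c : ℝ) (hc0 : 0 ≤ c)
    (hc : ∀ γ : ℕ, 1 ≤ γ →
      ∀ᵐ ω ∂(P γ),
        c * ({ω' | (γ : ℕ∞) ≤ τ ω'}.indicator (fun _ => (1 : ℝ)) ω)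
          ≤ ((P γ)[{ω' | τ ω' = (γ : ℕ∞)}.indicator (fun _ => (1 : ℝ)) |
              natF E (γ - 1)]) ω) :
    ENNReal.ofReal c * ∫⁻ ω, (τ ω : ℝ≥0∞) ∂Pinf
      ≤ ∫⁻ ω, μ1.rnDeriv μ0 (ω (τ ω).toNat) ∂Pinf :=
  stmt_4_general μ0 μ1 hac T hT Pinf hPinf_indep hPinf_marg P hP_prob hP_indep hP_marg τ hτ_stop c
    hc0 hc
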